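/- arXiv:1710.07836 — 2 statements merged into one kernel-verified Lean document; each statement's English description precedes it below -/
import Mathlib

section
/- Let N be a temporal rooted phylogenetic network on X. Then N is tree-based if and only if N satisfies the antichain-to-leaf property. -/
open Relation

/-- Out-degree of a vertex in a digraph given by its arc relation. -/
noncomputable def outDeg {V : Type*} (A : V → V → Prop) (v : V) : ℕ := {u | A v u}.ncard
/-- In-degree of a vertex in a digraph given by its arc relation. -/
noncomputable def inDeg {V : Type*} (A : V → V → Prop) (v : V) : ℕ := {u | A u v}.ncard

/-- A rooted phylogenetic network on leaf set `X`. -/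
structure PhyloNet (V : Type*) [Fintype V] [DecidableEq V] where
  Arc : V → V → Prop
  root : V
  X : Finset V
  acyclic : ∀ v, ¬ Relation.TransGen Arc v v
  reach : ∀ v, Relation.ReflTransGen Arc root v
  root_out : 1 ≤ outDeg Arc root
  leaf_iff : ∀ v, v ∈ X ↔ outDeg Arc v = 0
  leaf_in : ∀ v ∈ X, inDeg Arc v = 1
  internal : ∀ v, v ≠ root → v ∉ X →
    (inDeg Arc v = 1 ∧ 2 ≤ outDeg Arc v) ∨ (2 ≤ inDeg Arc v ∧ outDeg Arc v = 1)

section Defs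
variable {V : Type*} [Fintype V] [DecidableEq V]

/-- A reticulation: in-degree at least two. -/
def IsRetic (N : PhyloNet V) (v : V) : Prop := 2 ≤ inDeg N.Arc v
/-- A tree vertex: a non-leaf vertex of in-degree at most one. -/
def IsTreeVert (N : PhyloNet V) (v : V) : Prop := v ∉ N.X ∧ inDeg N.Arc v ≤ 1
/-- An omnian: a non-leaf vertex all of whose children are reticulations. -/
def IsOmnian (N : PhyloNet V) (v : V) : Prop := v ∉ N.X ∧ ∀ u, N.Arc v u → IsRetic N u
/-- A binary network: all in- and out-degrees are at most two. -/
def IsBinary (N : PhyloNet V) : Prop := ∀ v : V, inDeg N.Arc v ≤ 2 ∧ outDeg N.Arc v ≤ 2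

/-- A rooted spanning tree of `N` with the same root as `N`. -/
def IsRSTree (N : PhyloNet V) (T : V → V → Prop) : Prop :=
  (∀ u v, T u v → N.Arc u v) ∧ (∀ v, inDeg T v = 0 ↔ v = N.root) ∧
  (∀ v, v ≠ N.root → inDeg T v = 1)

/-- A support tree: a rooted spanning tree with the same root, all of whose leaves are in `X`. -/
def IsSupportTree (N : PhyloNet V) (T : V → V → Prop) : Prop :=
  IsRSTree N T ∧ ∀ v, outDeg T v = 0 → v ∈ N.X

/-- Tree-based network. -/
def TreeBased (N : PhyloNet V) : Prop := ∃ T, IsSupportTree N T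

/-- A (nonempty, repetition-free) directed path recorded as a list of vertices. -/
def IsPathIn (A : V → V → Prop) (p : List V) : Prop := p ≠ [] ∧ p.Chain' A ∧ p.Nodup
/-- The path ends at a vertex of `X`. -/
def EndsIn (X : Finset V) (p : List V) : Prop := ∃ x ∈ X, p.getLast? = some x
/-- Pairwise vertex-disjoint family of paths. -/
def PairwiseDisj (P : Finset (List V)) : Prop :=
  ∀ p ∈ P, ∀ q ∈ P, p ≠ q → ∀ v : V, v ∈ p → v ∉ q
/-- A partition of the vertex set of `N` into vertex-disjoint directed paths
ending at leaves in `X`. -/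
def IsPathPartition (N : PhyloNet V) (P : Finset (List V)) : Prop :=
  (∀ p ∈ P, IsPathIn N.Arc p ∧ EndsIn N.X p) ∧ PairwiseDisj P ∧ ∀ v : V, ∃ p ∈ P, v ∈ p

/-- A matching in the bipartite graph with edge set `E` (edges from a first copy of `V`
to a second copy of `V`), recorded as a set of edges no two of which share an endpoint. -/
def IsMatchingOn (E : V → V → Prop) (M : Finset (V × V)) : Prop :=
  (∀ e ∈ M, E e.1 e.2) ∧ ∀ e ∈ M, ∀ f ∈ M, (e.1 = f.1 ∨ e.2 = f.2) → e = f

/-- Size of a maximum matching of the bipartite graph with edge set `E`. -/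
noncomputable def maxMatching (E : V → V → Prop) : ℕ :=
  sSup {n | ∃ M : Finset (V × V), IsMatchingOn E M ∧ M.card = n}

/-- An antichain of vertices of `N`. -/
def AntichainIn (N : PhyloNet V) (S : Finset V) : Prop :=
  ∀ u ∈ S, ∀ v ∈ S, u ≠ v → ¬ Relation.TransGen N.Arc u v

/-- The antichain-to-leaf property: from every antichain there are pairwise
vertex-disjoint directed paths to leaves, one starting at each antichain element. -/
def AntichainToLeaf (N : PhyloNet V) : Prop :=
  ∀ S : Finset V, AntichainIn N S →
    ∃ f : V → List V,
      (∀ s ∈ S, IsPathIn N.Arc (f s) ∧ (f s).head? = some s ∧ EndsIn N.X (f s)) ∧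
      ∀ s ∈ S, ∀ t ∈ S, s ≠ t → ∀ v : V, v ∈ f s → v ∉ f t

/-- A temporal network: a real labelling strictly increasing along tree arcs and
constant along reticulation arcs. -/
def Temporal (N : PhyloNet V) : Prop :=
  ∃ l : V → ℝ, ∀ u v, N.Arc u v →
    (IsRetic N v → l u = l v) ∧ (¬ IsRetic N v → l u < l v)

/-- `N'` is a binary refinement of `N`, witnessed by the contraction map `φ`:
`N` is obtained from the binary network `N'` by contracting the arcs whose endpoints
are identified by `φ`. -/
def IsBinRefinement {V' : Type*} [Fintype V'] [DecidableEq V']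
    (N' : PhyloNet V') (N : PhyloNet V) (φ : V' → V) : Prop :=
  IsBinary N' ∧ Function.Surjective φ ∧ φ N'.root = N.root ∧
  N'.X.image φ = N.X ∧ Set.InjOn φ ↑N'.X ∧
  (∀ u v : V, N.Arc u v ↔ ∃ u' v', φ u' = u ∧ φ v' = v ∧ N'.Arc u' v' ∧ φ u' ≠ φ v') ∧
  (∀ a b : V', φ a = φ b →
    Relation.ReflTransGen (fun x y => (N'.Arc x y ∨ N'.Arc y x) ∧ φ x = φ y) a b)

/-- Edge of the bipartite graph `B_N` between omnians and reticulations. -/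
def BEdge (N : PhyloNet V) (o r : V) : Prop := IsOmnian N o ∧ IsRetic N r ∧ N.Arc o r
/-- Edge of the bipartite graph `Z_N` between tree vertices with a reticulation child
and reticulations. -/
def ZEdge (N : PhyloNet V) (t r : V) : Prop :=
  IsTreeVert N t ∧ (∃ r', N.Arc t r' ∧ IsRetic N r') ∧ IsRetic N r ∧ N.Arc t r

/-- `R_t`: reticulations with no reticulation parent. -/
def Rt (N : PhyloNet V) (v : V) : Prop := IsRetic N v ∧ ∀ u, N.Arc u v → ¬ IsRetic N u
/-- `Q_t`: vertices with a child in `R_t`. -/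
def Qt (N : PhyloNet V) (v : V) : Prop := ∃ r, N.Arc v r ∧ Rt N r
/-- Edge of the bipartite graph `J_N`. -/
def JEdge (N : PhyloNet V) (q r : V) : Prop := Qt N q ∧ Rt N r ∧ N.Arc q r

/-- A supporting set for `J_N`. -/
def IsSupportingSet (N : PhyloNet V) (E : Finset (V × V)) : Prop :=
  (∀ e ∈ E, JEdge N e.1 e.2) ∧
  (∀ q, Qt N q → IsOmnian N q → ∃ e ∈ E, e.1 = q) ∧
  (∀ r, Rt N r → ∃! e : V × V, e ∈ E ∧ e.2 = r)

/-- An arboreal arc: `u` is a reticulation, or `v` is a tree vertex or a leaf. -/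
def ArborealArc (N : PhyloNet V) (u v : V) : Prop :=
  N.Arc u v ∧ (IsRetic N u ∨ ¬ IsRetic N v)

/-- The number of support trees of `N`, identified with their arc sets. -/
noncomputable def supCount (N : PhyloNet V) : ℕ :=
  {A' : Finset (V × V) | IsSupportTree N (fun u v => (u, v) ∈ A')}.ncard

/-- The bipartite graph `J_N`, as a simple graph on `Q_t ∪ R_t`. -/
def Jgraph (N : PhyloNet V) : SimpleGraph {v : V // Qt N v ∨ Rt N v} where
  Adj a b := JEdge N a.1 b.1 ∨ JEdge N b.1 a.1
  symm := by constructor; intro a b h; tauto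
  loopless := by
    constructor; rintro a (⟨_, _, h⟩ | ⟨_, _, h⟩) <;> exact N.acyclic _ (Relation.TransGen.single h)

/-- Degree in `J_N`. -/
noncomputable def Jdeg (N : PhyloNet V) (a : {v : V // Qt N v ∨ Rt N v}) : ℕ :=
  ((Jgraph N).neighborSet a).ncard

end Defs

/-- A rooted tree (equivalently, a subdivision of a rooted tree): a rooted digraph
in which every non-root vertex has in-degree one and everything is reachable
from the root. -/
structure RootedDirTree (V : Type*) [Fintype V] [DecidableEq V] where
  Arc : V → V → Prop
  root : V
  acyclic : ∀ v, ¬ Relation.TransGen Arc v v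
  reach : ∀ v, Relation.ReflTransGen Arc root v
  root_in : inDeg Arc root = 0
  in_one : ∀ v, v ≠ root → inDeg Arc v = 1

/-!
If `N` has a support tree, follow it from every antichain vertex down to a leaf: two such
tree paths that met would make their starting points comparable.

Conversely, `N` is tree-based as soon as the non-leaf vertices have pairwise distinct chosen
children (each chosen child becomes the tree child of its parent). Otherwise Hall's condition
fails; take an inclusion-minimal violator `S`. Every child of `S` is shared by two members of
`S`, hence is a reticulation, and minimality puts all of `S` on one time level `τ`. Within a
level every arc enters a reticulation, and a reticulation has a single child, so from a child
of `S` the walk is forced along level-`τ` reticulations until it reaches a terminal one. The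
minimal elements `B` of `S` form an antichain, whose disjoint paths to leaves pass through
distinct terminals, and the other elements `D` of `S` lie on the forced chains; counting gives
`|B| + |D| ≤ |children of S| < |S| = |B| + |D|`.
-/

open Finset

section Acyclic

variable {V : Type*} {A : V → V → Prop}

theorem wellFounded_of_acyclic [Finite V] (h : ∀ v, ¬ TransGen A v v) : WellFounded A :=
  have : Std.Irrefl (TransGen A) := ⟨h⟩
  Subrelation.wf TransGen.single (Finite.wellFounded_of_trans_of_irrefl (TransGen A))

theorem List.IsChain.nodup_of_acyclic (h : ∀ v, ¬ TransGen A v v) {l : List V}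
    (hl : l.IsChain A) : l.Nodup :=
  (List.isChain_iff_pairwise.1 (hl.imp fun _ _ => TransGen.single)).imp (S := (· ≠ ·))
    fun hab hba => h _ (hba ▸ hab)

theorem List.IsChain.exists_rel_of_getLast?_ne {l : List V} (hl : l.IsChain A) {x : V}
    (hx : x ∈ l) (hlast : l.getLast? ≠ some x) : ∃ y ∈ l, A x y := by
  induction l with
  | nil => simp at hx
  | cons a l ih =>
    cases l with
    | nil => simp_all
    | cons b l =>
      rw [List.isChain_cons_cons] at hl
      rw [List.getLast?_cons_cons] at hlast
      rcases List.mem_cons.1 hx with rfl | hx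
      · exact ⟨b, by simp, hl.1⟩
      · obtain ⟨y, hy, hxy⟩ := ih hl.2 hx hlast
        exact ⟨y, List.mem_cons_of_mem _ hy, hxy⟩

theorem exists_isChain_to_sink [Finite V] (h : ∀ v, ¬ TransGen A v v) (v : V) :
    ∃ p : List V, p.head? = some v ∧ p.IsChain A ∧
      (∀ z, p.getLast? = some z → ∀ w, ¬ A z w) ∧ ∀ w ∈ p, ReflTransGen A v w := by
  have hwf := wellFounded_of_acyclic (A := Function.swap A) fun v hv => h v (transGen_swap.1 hv)
  induction v using hwf.induction with
  | _ v ih =>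
    by_cases hsink : ∀ w, ¬ A v w
    · exact ⟨[v], rfl, List.isChain_singleton v, by simpa using hsink, by simp [ReflTransGen.refl]⟩
    push Not at hsink
    obtain ⟨w, hvw⟩ := hsink
    obtain ⟨p, hhead, hchain, hlast, hreach⟩ := ih w hvw
    obtain ⟨tl, rfl⟩ : ∃ tl, p = w :: tl := by
      cases p with
      | nil => simp at hhead
      | cons a tl => exact ⟨tl, by simpa using hhead⟩
    refine ⟨v :: w :: tl, rfl, List.isChain_cons_cons.2 ⟨hvw, hchain⟩, ?_, ?_⟩
    · simpa only [List.getLast?_cons_cons] using hlast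
    · intro u hu
      rcases List.mem_cons.1 hu with rfl | hu
      · exact ReflTransGen.refl
      · exact ReflTransGen.head hvw (hreach u hu)

end Acyclic

theorem outDeg_eq_zero_iff {V : Type*} [Finite V] {A : V → V → Prop} {v : V} :
    outDeg A v = 0 ↔ ∀ w, ¬ A v w := by
  rw [outDeg, Set.ncard_eq_zero]
  exact Set.eq_empty_iff_forall_notMem

section DeterministicChain

variable {V : Type*} {A : V → V → Prop} {P : V → Prop}

variable (A P) in
def chainStep (x y : V) : Prop := P x ∧ A x y

theorem reflTransGen_of_chainStep {x y : V} (h : ReflTransGen (chainStep A P) x y) :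
    ReflTransGen A x y :=
  ReflTransGen.mono (fun _ _ => And.right) _ _ h

theorem eq_of_reflTransGen_chainStep {y w : V} (h : ReflTransGen (chainStep A P) y w)
    (hy : ∀ z, A y z → ¬ P z) (hw : P w) : y = w := by
  rcases h.cases_head with rfl | ⟨u, hyu, huw⟩
  · rfl
  · refine absurd ?_ (hy u hyu.2)
    rcases huw.cases_head with rfl | ⟨_, hu, _⟩
    exacts [hw, hu.1]

theorem List.IsChain.exists_terminal (hU : Relator.RightUnique (chainStep A P)) {l : List V}
    (hl : l.IsChain A) (hlast : ∀ z, l.getLast? = some z → ¬ P z) {x : V} (hx : x ∈ l)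
    (hPx : P x) :
    ∃ y ∈ l, ReflTransGen (chainStep A P) x y ∧ P y ∧ ∀ z, A y z → ¬ P z := by
  induction l generalizing x with
  | nil => simp at hx
  | cons a l ih =>
    cases l with
    | nil => simp_all
    | cons b l =>
      rw [List.isChain_cons_cons] at hl
      rw [List.getLast?_cons_cons] at hlast
      have ih' := @ih hl.2 hlast
      rcases List.mem_cons.1 hx with rfl | hx
      · by_cases hPb : P b
        · obtain ⟨y, hy, hxy, hPy, hyt⟩ := ih' (by simp) hPb
          exact ⟨y, List.mem_cons_of_mem _ hy, ReflTransGen.head ⟨hPx, hl.1⟩ hxy, hPy, hyt⟩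
        · refine ⟨x, by simp, ReflTransGen.refl, hPx, fun z hz => ?_⟩
          rwa [hU ⟨hPx, hz⟩ ⟨hPx, hl.1⟩]
      · obtain ⟨y, hy, hxy⟩ := ih' hx hPx
        exact ⟨y, List.mem_cons_of_mem _ hy, hxy⟩

theorem card_le_card_of_terminals (hU : Relator.RightUnique (chainStep A P)) {C E : Finset V}
    (hE : ∀ y ∈ E, P y ∧ (∀ z, A y z → ¬ P z) ∧ ∃ c ∈ C, ReflTransGen (chainStep A P) c y) :
    #E ≤ #C := by
  choose! src hsrc hchain using fun y hy => (hE y hy).2.2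
  refine card_le_card_of_injOn src hsrc fun y hy y' hy' h => ?_
  have hc' := hchain y' hy'
  rw [← h] at hc'
  rcases (hchain y hy).total_of_right_unique hU hc' with hyy' | hy'y
  · exact eq_of_reflTransGen_chainStep hyy' (hE y hy).2.1 (hE y' hy').1
  · exact (eq_of_reflTransGen_chainStep hy'y (hE y' hy').2.1 (hE y hy).1).symm

variable [DecidableEq V]

theorem exists_mem_erase_reflTransGen_chainStep (hU : Relator.RightUnique (chainStep A P))
    {C : Finset V} {r d z v c : V} (hrd : ReflTransGen (chainStep A P) r d)
    (hdz : chainStep A P d z) (hz : z ∈ C) (hzr : z ≠ r) (hvd : ¬ ReflTransGen (chainStep A P) v d)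
    (hc : c ∈ C) (hcv : ReflTransGen (chainStep A P) c v) :
    ∃ c ∈ C.erase r, ReflTransGen (chainStep A P) c v := by
  by_cases hcr : c = r
  · subst hcr
    rcases hcv.total_of_right_unique hU hrd with hvd' | hdv
    · exact absurd hvd' hvd
    · rcases hdv.cases_head with rfl | ⟨w, hdw, hwv⟩
      · exact absurd .refl hvd
      · exact ⟨z, mem_erase.2 ⟨hzr, hz⟩, hU hdw hdz ▸ hwv⟩
  · exact ⟨c, mem_erase.2 ⟨hcr, hc⟩, hcv⟩

/-- Induction on `D`: remove a topmost `d₀ ∈ D` together with some `r₀ ∈ C` whose chain reaches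
`d₀`; everything reached from `r₀` beyond `d₀` is reached from the child of `d₀`, which lies in
`C` and differs from `r₀`. -/
theorem card_add_card_le_of_chains [Finite V] (hacyc : ∀ v, ¬ TransGen A v v)
    (hU : Relator.RightUnique (chainStep A P)) {C D E : Finset V} (hC : ∀ c ∈ C, P c)
    (hD : ∀ d ∈ D, P d ∧ (∃ z ∈ C, A d z) ∧ ∃ c ∈ C, ReflTransGen (chainStep A P) c d)
    (hE : ∀ y ∈ E, P y ∧ (∀ z, A y z → ¬ P z) ∧ ∃ c ∈ C, ReflTransGen (chainStep A P) c y) :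
    #E + #D ≤ #C := by
  induction D using Finset.strongInduction generalizing C with
  | H D ih =>
    rcases D.eq_empty_or_nonempty with rfl | hDne
    · simpa using card_le_card_of_terminals hU hE
    obtain ⟨d₀, hd₀, hmin⟩ := (wellFounded_of_acyclic hacyc).transGen.has_min _ hDne
    obtain ⟨hPd₀, ⟨z₀, hz₀, hd₀z₀⟩, r₀, hr₀, hr₀d₀⟩ := hD d₀ hd₀
    have hz₀r₀ : z₀ ≠ r₀ := by
      rintro rfl
      exact hacyc _ (TransGen.tail' (reflTransGen_of_chainStep hr₀d₀) hd₀z₀)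
    have hsource {v c : V} := exists_mem_erase_reflTransGen_chainStep (v := v) (c := c) hU hr₀d₀
      ⟨hPd₀, hd₀z₀⟩ hz₀ hz₀r₀
    have := ih (D.erase d₀) (erase_ssubset hd₀) (C := C.erase r₀)
      (fun c hc => hC c (mem_of_mem_erase hc)) ?_ ?_
    · rw [card_erase_of_mem hd₀, card_erase_of_mem hr₀] at this
      have := card_pos.2 hDne
      have := card_pos.2 ⟨r₀, hr₀⟩
      omega
    · intro d hd
      obtain ⟨hne, hdD⟩ := mem_erase.1 hd
      obtain ⟨hPd, ⟨z, hz, hdz⟩, c, hc, hcd⟩ := hD d hdD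
      have hdd₀ : ¬ ReflTransGen A d d₀ := fun h =>
        (reflTransGen_iff_eq_or_transGen.1 h).elim (fun h => hne h.symm) (hmin d hdD)
      refine ⟨hPd, ⟨z, mem_erase.2 ⟨?_, hz⟩, hdz⟩,
        hsource (fun h => hdd₀ (reflTransGen_of_chainStep h)) hc hcd⟩
      rintro rfl
      exact hdd₀ (ReflTransGen.head hdz (reflTransGen_of_chainStep hr₀d₀))
    · intro y hy
      obtain ⟨hPy, hyt, c, hc, hcy⟩ := hE y hy
      refine ⟨hPy, hyt, hsource (fun h => ?_) hc hcy⟩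
      rw [eq_of_reflTransGen_chainStep h hyt hPd₀] at hyt
      exact hyt z₀ hd₀z₀ (hC z₀ hz₀)

end DeterministicChain

section HallViolator

variable {ι α : Type*} [DecidableEq α] {t : ι → Finset α} {S : Finset ι}

theorem exists_minimal_hall_violator (h : ¬ ∀ S : Finset ι, #S ≤ #(S.biUnion t)) :
    ∃ S : Finset ι, #(S.biUnion t) < #S ∧ ∀ S' ⊂ S, #S' ≤ #(S'.biUnion t) := by
  push Not at h
  obtain ⟨S, hS, hmin⟩ := wellFounded_lt.has_min {S : Finset ι | #(S.biUnion t) < #S} h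
  exact ⟨S, hS, fun S' hS' => not_lt.1 fun h' => hmin S' h' hS'⟩

variable [DecidableEq ι] (hS : #(S.biUnion t) < #S) (hmin : ∀ S' ⊂ S, #S' ≤ #(S'.biUnion t))
include hS hmin

theorem biUnion_erase_eq_of_minimal_hall_violator {s : ι} (hs : s ∈ S) :
    (S.erase s).biUnion t = S.biUnion t := by
  refine eq_of_subset_of_card_le (biUnion_subset_biUnion_of_subset_left _ (erase_subset _ _)) ?_
  have := hmin _ (erase_ssubset hs)
  rw [card_erase_of_mem hs] at this
  omega

theorem exists_ne_mem_of_minimal_hall_violator {s : ι} (hs : s ∈ S) {a : α} (ha : a ∈ t s) :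
    ∃ s' ∈ S, s' ≠ s ∧ a ∈ t s' := by
  have ha' : a ∈ (S.erase s).biUnion t := by
    rw [biUnion_erase_eq_of_minimal_hall_violator hS hmin hs]
    exact mem_biUnion.2 ⟨s, hs, ha⟩
  obtain ⟨s', hs', has'⟩ := mem_biUnion.1 ha'
  exact ⟨s', mem_of_mem_erase hs', ne_of_mem_erase hs', has'⟩

theorem eq_of_minimal_hall_violator {γ : Type*} (g : ι → γ)
    (hg : ∀ s ∈ S, ∀ s' ∈ S, ∀ a ∈ t s, a ∈ t s' → g s = g s') {s s' : ι} (hs : s ∈ S)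
    (hs' : s' ∈ S) : g s = g s' := by
  classical
  by_contra hne
  set S₁ := S.filter (g · = g s)
  set S₂ := S.filter (¬ g · = g s)
  have hdisj : Disjoint (S₁.biUnion t) (S₂.biUnion t) := by
    refine disjoint_left.2 fun a ha₁ ha₂ => ?_
    obtain ⟨u, hu, hau⟩ := mem_biUnion.1 ha₁
    obtain ⟨w, hw, haw⟩ := mem_biUnion.1 ha₂
    obtain ⟨huS, hgu⟩ := mem_filter.1 hu
    obtain ⟨hwS, hgw⟩ := mem_filter.1 hw
    exact hgw (hgu ▸ (hg u huS w hwS a hau haw).symm)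
  have h₁ := hmin S₁ (filter_ssubset.2 ⟨s', hs', fun h => hne h.symm⟩)
  have h₂ := hmin S₂ (filter_ssubset.2 ⟨s, hs, not_not.2 rfl⟩)
  have hsplit : S.biUnion t = S₁.biUnion t ∪ S₂.biUnion t := by
    rw [← union_biUnion, filter_union_filter_not_eq]
  have : #S₁ + #S₂ = #S := card_filter_add_card_filter_not _
  rw [hsplit, card_union_of_disjoint hdisj] at hS
  omega

end HallViolator

section Network

variable {V : Type*} [Fintype V] [DecidableEq V] {N : PhyloNet V}

noncomputable def PhyloNet.children (N : PhyloNet V) (v : V) : Finset V :=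
  (Set.toFinite {u | N.Arc v u}).toFinset

@[simp]
theorem PhyloNet.mem_children {u v : V} : u ∈ N.children v ↔ N.Arc v u :=
  Set.Finite.mem_toFinset _

theorem PhyloNet.mem_biUnion_children {S : Finset V} {u : V} :
    u ∈ S.biUnion N.children ↔ ∃ s ∈ S, N.Arc s u := by
  simp

theorem PhyloNet.not_arc_root (u : V) : ¬ N.Arc u N.root :=
  fun h => N.acyclic _ (TransGen.tail' (N.reach u) h)

theorem PhyloNet.exists_arc_of_ne_root {v : V} (hv : v ≠ N.root) : ∃ u, N.Arc u v := by
  have : 0 < inDeg N.Arc v := by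
    by_cases hx : v ∈ N.X
    · rw [N.leaf_in v hx]; exact one_pos
    · rcases N.internal v hv hx with ⟨h, _⟩ | ⟨h, _⟩ <;> omega
  exact (Set.ncard_pos (Set.toFinite _)).1 this

theorem PhyloNet.exists_arc_of_notMem_X {v : V} (hv : v ∉ N.X) : ∃ u, N.Arc v u := by
  by_contra h
  push Not at h
  exact hv ((N.leaf_iff v).2 (outDeg_eq_zero_iff.2 h))

theorem IsRetic.notMem_X {v : V} (h : IsRetic N v) : v ∉ N.X := fun hx => by
  have := N.leaf_in v hx
  unfold IsRetic at h
  omega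

theorem IsRetic.ne_root {v : V} (h : IsRetic N v) : v ≠ N.root := by
  rintro rfl
  have : inDeg N.Arc N.root = 0 :=
    (Set.ncard_eq_zero (Set.toFinite _)).2 (Set.eq_empty_of_forall_notMem N.not_arc_root)
  unfold IsRetic at h
  omega

theorem IsRetic.eq_of_arc {x a b : V} (h : IsRetic N x) (ha : N.Arc x a) (hb : N.Arc x b) :
    a = b := by
  have : outDeg N.Arc x = 1 := by
    rcases N.internal x h.ne_root h.notMem_X with ⟨h1, _⟩ | ⟨_, h2⟩
    · unfold IsRetic at h; omega
    · exact h2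
  exact (Set.ncard_le_one (Set.toFinite _)).1 this.le a ha b hb

theorem isRetic_of_arc_of_arc {s s' v : V} (h : N.Arc s v) (h' : N.Arc s' v) (hne : s ≠ s') :
    IsRetic N v := by
  have := Set.ncard_le_ncard (s := {s, s'}) (t := {u | N.Arc u v})
    (by rintro u (rfl | rfl) <;> assumption)
  rwa [Set.ncard_pair hne] at this

theorem rightUnique_chainStep {P : V → Prop} (hP : ∀ v, P v → IsRetic N v) :
    Relator.RightUnique (chainStep N.Arc P) :=
  fun _ _ _ ha hb => (hP _ ha.1).eq_of_arc ha.2 hb.2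

end Network

section SupportTree

variable {V : Type*} [Fintype V] [DecidableEq V] {N : PhyloNet V} {T : V → V → Prop}

theorem IsRSTree.eq_of_arc_of_arc (hT : IsRSTree N T) {p q w : V} (hp : T p w) (hq : T q w) :
    p = q :=
  (Set.ncard_le_one (Set.toFinite _)).1
    (hT.2.2 w fun h => N.not_arc_root p (h ▸ hT.1 p w hp)).le p hp q hq

theorem isRSTree_of_parent (π : V → V) (hπ : ∀ w, w ≠ N.root → N.Arc (π w) w) :
    IsRSTree N fun u w => w ≠ N.root ∧ π w = u := by
  refine ⟨fun u w h => h.2 ▸ hπ w h.1, fun v => ?_, fun v hv => by simp [inDeg, hv]⟩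
  by_cases hv : v = N.root <;> simp [inDeg, hv]

theorem treeBased_of_injective {f : {v // v ∉ N.X} → V} (hf : f.Injective)
    (harc : ∀ v, N.Arc v.1 (f v)) : TreeBased N := by
  classical
  let parent : V → V := fun w => if h : ∃ u, N.Arc u w then h.choose else w
  have hparent : ∀ w, w ≠ N.root → N.Arc (parent w) w := fun w hw => by
    simp only [parent, dif_pos (N.exists_arc_of_ne_root hw)]
    exact (N.exists_arc_of_ne_root hw).choose_spec
  let π := Function.extend f Subtype.val parent
  have hπf : ∀ v, π (f v) = v := hf.extend_apply _ _
  have hπ : ∀ w, w ≠ N.root → N.Arc (π w) w := by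
    intro w hw
    by_cases h : ∃ v, f v = w
    · obtain ⟨v, rfl⟩ := h
      rw [hπf]
      exact harc v
    · rw [show π w = parent w from Function.extend_apply' _ _ _ h]
      exact hparent w hw
  refine ⟨_, isRSTree_of_parent π hπ, fun v hv => ?_⟩
  by_contra hvX
  exact outDeg_eq_zero_iff.1 hv (f ⟨v, hvX⟩)
    ⟨fun h => N.not_arc_root v (h ▸ harc ⟨v, hvX⟩), hπf _⟩

theorem IsSupportTree.exists_path (hT : IsSupportTree N T) (v : V) :
    ∃ p : List V, p.head? = some v ∧ IsPathIn N.Arc p ∧ EndsIn N.X p ∧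
      ∀ w ∈ p, ReflTransGen T v w := by
  have hacyc : ∀ v, ¬ TransGen T v v := fun v h => N.acyclic v (TransGen.mono hT.1.1 _ _ h)
  obtain ⟨p, hhead, hchain, hsink, hreach⟩ := exists_isChain_to_sink hacyc v
  have hchain' : p.IsChain N.Arc := hchain.imp hT.1.1
  have hne : p ≠ [] := by rintro rfl; simp at hhead
  have hlast := List.getLast?_eq_some_getLast hne
  exact ⟨p, hhead, ⟨hne, hchain', hchain'.nodup_of_acyclic N.acyclic⟩,
    ⟨_, hT.2 _ (outDeg_eq_zero_iff.2 (hsink _ hlast)), hlast⟩, hreach⟩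

theorem TreeBased.antichainToLeaf (h : TreeBased N) : AntichainToLeaf N := by
  obtain ⟨T, hT⟩ := h
  choose f hhead hpath hend hreach using hT.exists_path
  have hU : Relator.RightUnique (Function.swap T) := fun _ _ _ hp hq => hT.1.eq_of_arc_of_arc hp hq
  refine fun S hS => ⟨f, fun s _ => ⟨hpath s, hhead s, hend s⟩, fun s hs s' hs' hne v hv hv' => ?_⟩
  have hT' : ∀ {a b}, ReflTransGen T a b → a ≠ b → TransGen N.Arc a b := fun h hab =>
    TransGen.mono hT.1.1 _ _ ((reflTransGen_iff_eq_or_transGen.1 h).resolve_left hab.symm)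
  rcases (reflTransGen_swap.2 (hreach s v hv)).total_of_right_unique hU
    (reflTransGen_swap.2 (hreach s' v hv')) with h | h <;> rw [reflTransGen_swap] at h
  · exact hS s' hs' s hs (Ne.symm hne) (hT' h (Ne.symm hne))
  · exact hS s hs s' hs' hne (hT' h hne)

end SupportTree

section Temporal

variable {V : Type*} [Fintype V] [DecidableEq V] {N : PhyloNet V}
  {α : Type*} [PartialOrder α] {lab : V → α}

def IsTemporalLabelling (N : PhyloNet V) (lab : V → α) : Prop :=
  ∀ u v, N.Arc u v → (IsRetic N v → lab u = lab v) ∧ (¬ IsRetic N v → lab u < lab v)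

def IsReticAt (N : PhyloNet V) (lab : V → α) (τ : α) (v : V) : Prop :=
  IsRetic N v ∧ lab v = τ

theorem IsTemporalLabelling.le_of_reflTransGen (hl : IsTemporalLabelling N lab) {u v : V}
    (h : ReflTransGen N.Arc u v) : lab u ≤ lab v := by
  induction h with
  | refl => exact le_rfl
  | @tail b c _ hbc ih =>
    by_cases hc : IsRetic N c
    · exact ih.trans ((hl b c hbc).1 hc).le
    · exact ih.trans ((hl b c hbc).2 hc).le

theorem IsTemporalLabelling.isRetic_of_le (hl : IsTemporalLabelling N lab) {u v : V}
    (h : N.Arc u v) (hle : lab v ≤ lab u) : IsRetic N v ∧ lab u = lab v := by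
  by_cases hv : IsRetic N v
  · exact ⟨hv, (hl u v h).1 hv⟩
  · exact absurd ((hl u v h).2 hv) hle.not_gt

theorem IsTemporalLabelling.isReticAt_of_arc (hl : IsTemporalLabelling N lab) {τ : α} {u v : V}
    (h : N.Arc u v) (hv : IsRetic N v) (hu : lab u = τ) : IsReticAt N lab τ v :=
  ⟨hv, ((hl u v h).1 hv).symm.trans hu⟩

theorem IsTemporalLabelling.reflTransGen_chainStep (hl : IsTemporalLabelling N lab) {τ : α}
    {x y : V} (h : ReflTransGen N.Arc x y) (hx : IsReticAt N lab τ x) (hy : lab y ≤ τ) :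
    ReflTransGen (chainStep N.Arc (IsReticAt N lab τ)) x y ∧ IsReticAt N lab τ y := by
  induction h using ReflTransGen.head_induction_on with
  | refl => exact ⟨.refl, hx⟩
  | @head x c hxc hcy ih =>
    have hcx : lab c ≤ lab x := (hl.le_of_reflTransGen hcy).trans (hy.trans hx.2.ge)
    obtain ⟨hc, hxc'⟩ := hl.isRetic_of_le hxc hcx
    obtain ⟨hchain, hPy⟩ := ih ⟨hc, hxc'.symm.trans hx.2⟩
    exact ⟨.head ⟨hx, hxc⟩ hchain, hPy⟩

theorem IsTemporalLabelling.exists_chainStep_of_transGen (hl : IsTemporalLabelling N lab)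
    {τ : α} {s d : V} (hs : lab s = τ) (hd : lab d = τ)
    (hret : ∀ c, N.Arc s c → IsRetic N c) (hsd : TransGen N.Arc s d) :
    ∃ c, N.Arc s c ∧ ReflTransGen (chainStep N.Arc (IsReticAt N lab τ)) c d ∧
      IsReticAt N lab τ d := by
  obtain ⟨c, hsc, hcd⟩ := TransGen.head'_iff.1 hsd
  exact ⟨c, hsc, hl.reflTransGen_chainStep hcd (hl.isReticAt_of_arc hsc (hret c hsc) hs) hd.le⟩

end Temporal

section AntichainToLeaf

variable {V : Type*} [Fintype V] [DecidableEq V] {N : PhyloNet V}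

theorem IsPathIn.exists_terminal {P : V → Prop} (hU : Relator.RightUnique (chainStep N.Arc P))
    (hPX : ∀ v, P v → v ∉ N.X) {p : List V} {b : V} (hp : IsPathIn N.Arc p)
    (hhead : p.head? = some b) (hend : EndsIn N.X p) (hb : b ∉ N.X)
    (hbP : ∀ c, N.Arc b c → P c) :
    ∃ c y, N.Arc b c ∧ y ∈ p ∧ ReflTransGen (chainStep N.Arc P) c y ∧ P y ∧
      ∀ z, N.Arc y z → ¬ P z := by
  obtain ⟨-, hchain, -⟩ := hp
  obtain ⟨x, hxX, hlast⟩ := hend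
  obtain ⟨c, hc, hbc⟩ := List.IsChain.exists_rel_of_getLast?_ne hchain
    (List.mem_of_mem_head? hhead) (by rw [hlast]; rintro ⟨⟩; exact hb hxX)
  obtain ⟨y, hy, hcy, hPy, hyt⟩ := List.IsChain.exists_terminal hU hchain
    (fun z hz hPz => hPX z hPz (by rw [hlast] at hz; cases hz; exact hxX)) hc (hbP c hbc)
  exact ⟨c, y, hbc, hy, hcy, hPy, hyt⟩

variable {α : Type*} [PartialOrder α] {lab : V → α}

theorem AntichainToLeaf.card_le_card_biUnion_children (hA : AntichainToLeaf N)
    (hl : IsTemporalLabelling N lab) {S : Finset V} {τ : α} (hSX : ∀ s ∈ S, s ∉ N.X)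
    (hSτ : ∀ s ∈ S, lab s = τ) (hret : ∀ s ∈ S, ∀ c, N.Arc s c → IsRetic N c) :
    #S ≤ #(S.biUnion N.children) := by
  classical
  set C := S.biUnion N.children
  set P := IsReticAt N lab τ
  have hU : Relator.RightUnique (chainStep N.Arc P) := rightUnique_chainStep fun _ h => h.1
  have hC : ∀ c ∈ C, P c := by
    intro c hc
    obtain ⟨s, hs, hsc⟩ := PhyloNet.mem_biUnion_children.1 hc
    exact hl.isReticAt_of_arc hsc (hret s hs c hsc) (hSτ s hs)
  set D := S.filter fun d => ∃ s ∈ S, TransGen N.Arc s d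
  set B := S.filter fun b => ¬ ∃ s ∈ S, TransGen N.Arc s b
  have hD : ∀ d ∈ D, P d ∧ (∃ z ∈ C, N.Arc d z) ∧
      ∃ c ∈ C, ReflTransGen (chainStep N.Arc P) c d := by
    intro d hd
    obtain ⟨hdS, s, hs, hsd⟩ := mem_filter.1 hd
    obtain ⟨c, hsc, hcd, hPd⟩ :=
      hl.exists_chainStep_of_transGen (hSτ s hs) (hSτ d hdS) (hret s hs) hsd
    obtain ⟨z, hz⟩ := N.exists_arc_of_notMem_X (hSX d hdS)
    exact ⟨hPd, ⟨z, PhyloNet.mem_biUnion_children.2 ⟨d, hdS, hz⟩, hz⟩, c,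
      PhyloNet.mem_biUnion_children.2 ⟨s, hs, hsc⟩, hcd⟩
  obtain ⟨f, hf, hdisj⟩ :=
    hA B fun u hu v hv _ huv => (mem_filter.1 hv).2 ⟨u, (mem_filter.1 hu).1, huv⟩
  have hexit := fun b (hb : b ∈ B) => (hf b hb).1.exists_terminal hU (fun _ h => h.1.notMem_X)
    (hf b hb).2.1 (hf b hb).2.2 (hSX b (mem_filter.1 hb).1) fun c hbc =>
      hC c (PhyloNet.mem_biUnion_children.2 ⟨b, (mem_filter.1 hb).1, hbc⟩)
  choose! c e hbc he hce hPe hterm using hexit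
  have hinj : Set.InjOn e B := fun b hb b' hb' h => by
    by_contra hne
    exact hdisj b hb b' hb' hne _ (he b hb) (h ▸ he b' hb')
  calc #S = #(B.image e) + #D := by
        rw [card_image_of_injOn hinj, add_comm]
        exact (card_filter_add_card_filter_not _).symm
    _ ≤ #C := card_add_card_le_of_chains N.acyclic hU hC hD <| forall_mem_image.2 fun b hb =>
        ⟨hPe b hb, hterm b hb, c b,
          PhyloNet.mem_biUnion_children.2 ⟨b, (mem_filter.1 hb).1, hbc b hb⟩, hce b hb⟩

theorem AntichainToLeaf.treeBased (hA : AntichainToLeaf N) (hl : IsTemporalLabelling N lab) :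
    TreeBased N := by
  by_contra hTB
  obtain ⟨S, hS, hmin⟩ := exists_minimal_hall_violator (t := fun v : {v // v ∉ N.X} => N.children v)
    fun hall => hTB <| by
      obtain ⟨f, hf, hft⟩ := (all_card_le_biUnion_card_iff_exists_injective _).1 hall
      exact treeBased_of_injective hf fun v => PhyloNet.mem_children.1 (hft v)
  have hret : ∀ s ∈ S, ∀ c, N.Arc s c → IsRetic N c := fun s hs c hc => by
    obtain ⟨s', hs', hne, hc'⟩ :=
      exists_ne_mem_of_minimal_hall_violator hS hmin hs (PhyloNet.mem_children.2 hc)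
    exact isRetic_of_arc_of_arc hc (PhyloNet.mem_children.1 hc') (Subtype.coe_injective.ne hne.symm)
  have hlev : ∀ s ∈ S, ∀ s' ∈ S, lab s = lab s' := fun s hs s' hs' =>
    eq_of_minimal_hall_violator hS hmin (lab ∘ Subtype.val) (fun u hu w hw a hua hwa => by
      rw [PhyloNet.mem_children] at hua hwa
      exact ((hl _ _ hua).1 (hret u hu a hua)).trans ((hl _ _ hwa).1 (hret w hw a hwa)).symm)
      hs hs'
  obtain ⟨s₀, hs₀⟩ : S.Nonempty := card_pos.1 (by omega)
  have := hA.card_le_card_biUnion_children hl (S := S.image Subtype.val) (τ := lab s₀)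
    (fun _ hs => by obtain ⟨s, -, rfl⟩ := mem_image.1 hs; exact s.2)
    (by simpa using fun s hs hsS => hlev _ hsS _ hs₀)
    (by simpa using fun s hs hsS => hret _ hsS)
  rw [card_image_of_injective _ Subtype.coe_injective, image_biUnion] at this
  omega

end AntichainToLeaf

/-- a temporal network is tree-based iff it satisfies the
antichain-to-leaf property. -/
theorem stmt7 {V : Type*} [Fintype V] [DecidableEq V] (N : PhyloNet V)
    (h : Temporal N) : TreeBased N ↔ AntichainToLeaf N := by
  obtain ⟨lab, hl⟩ := h
  exact ⟨TreeBased.antichainToLeaf, fun hA => hA.treeBased hl⟩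
end

section
/- Let N be a binary rooted phylogenetic network, T_N the set of tree vertices having at least one reticulation child, R the set of reticulations, and Z_N the bipartite graph on (T_N, R) with an edge {t,r} whenever (t,r) is an arc of N. Then N is tree-based if and only if Z_N has a matching of size |R|. -/
open Relation

/-!
In a binary network every reticulation has exactly two parents, and a support tree keeps exactly
one of the two arcs entering it. Sending each reticulation to the parent whose arc is dropped gives
the matching: that parent is not a reticulation (its only out-arc would be dropped, so it would be a
non-leaf without children in the tree), and two reticulations cannot share it (it would lose both of
its out-arcs). Conversely, dropping the matched arc into every reticulation leaves a support tree:
injectivity of the matching ensures that no tree vertex loses all of its out-arcs.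
-/

section Matching

variable {V : Type*} [DecidableEq V]

theorem exists_isMatchingOn_card_eq_iff {E : V → V → Prop} {S : Finset V}
    (hE : ∀ a r, E a r → r ∈ S) :
    (∃ M : Finset (V × V), IsMatchingOn E M ∧ M.card = S.card) ↔
      ∃ f : V → V, (∀ r ∈ S, E (f r) r) ∧ Set.InjOn f S := by
  constructor
  · rintro ⟨M, ⟨hME, hM⟩, hcard⟩
    have hsnd : Set.InjOn Prod.snd (M : Set (V × V)) := fun e he e' he' h =>
      hM e he e' he' (Or.inr h)
    have himage : M.image Prod.snd = S :=
      Finset.eq_of_subset_of_card_le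
        (fun r hr => by
          obtain ⟨e, he, rfl⟩ := Finset.mem_image.1 hr
          exact hE _ _ (hME e he))
        (by rw [Finset.card_image_of_injOn hsnd, hcard])
    have hcover : ∀ r ∈ S, ∃ a, (a, r) ∈ M := fun r hr => by
      obtain ⟨e, he, rfl⟩ := Finset.mem_image.1 (himage ▸ hr)
      exact ⟨e.1, he⟩
    choose! f hf using hcover
    refine ⟨f, fun r hr => hME _ (hf r hr), fun r₁ h₁ r₂ h₂ heq => ?_⟩
    exact congrArg Prod.snd (hM _ (hf r₁ h₁) _ (hf r₂ h₂) (Or.inl heq))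
  · rintro ⟨f, hfE, hf⟩
    refine ⟨S.image fun r => (f r, r), ⟨?_, ?_⟩, ?_⟩
    · simp only [Finset.mem_image]
      rintro _ ⟨r, hr, rfl⟩
      exact hfE r hr
    · simp only [Finset.mem_image]
      rintro _ ⟨r₁, h₁, rfl⟩ _ ⟨r₂, h₂, rfl⟩ h
      rw [show r₁ = r₂ from h.elim (hf h₁ h₂) id]
    · exact Finset.card_image_of_injective _ fun r₁ r₂ h => congrArg Prod.snd h

end Matching

namespace PhyloNet

variable {V : Type*} [Fintype V] [DecidableEq V] (N : PhyloNet V)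

theorem not_arc_root_s14 (u : V) : ¬ N.Arc u N.root := fun h =>
  N.acyclic _ (TransGen.tail' (N.reach u) h)

theorem not_mem_X_of_arc {u v : V} (h : N.Arc u v) : u ∉ N.X := fun hx =>
  ((Set.ncard_pos).2 ⟨v, h⟩).ne' ((N.leaf_iff u).1 hx)

theorem exists_arc_of_not_mem_X {v : V} (hv : v ∉ N.X) : ∃ c, N.Arc v c :=
  (Set.ncard_pos).1 (Nat.pos_of_ne_zero fun h => hv ((N.leaf_iff v).2 h))

theorem ne_root_of_isRetic {v : V} (hv : IsRetic N v) : v ≠ N.root := by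
  rintro rfl
  simp [IsRetic, inDeg, N.not_arc_root_s14] at hv

theorem not_mem_X_of_isRetic {v : V} (hv : IsRetic N v) : v ∉ N.X := fun hx => by
  have := N.leaf_in v hx
  unfold IsRetic at hv
  omega

theorem isTreeVert_of_arc {u v : V} (h : N.Arc u v) (hu : ¬ IsRetic N u) : IsTreeVert N u :=
  ⟨N.not_mem_X_of_arc h, by unfold IsRetic at hu; omega⟩

theorem not_isRetic_of_isTreeVert {v : V} (hv : IsTreeVert N v) : ¬ IsRetic N v := by
  have := hv.2
  unfold IsRetic
  omega

theorem eq_of_arc_of_isRetic {v a b : V} (hv : IsRetic N v) (ha : N.Arc v a) (hb : N.Arc v b) :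
    a = b := by
  have hout : outDeg N.Arc v ≤ 1 := by
    rcases N.internal v (N.ne_root_of_isRetic hv) (N.not_mem_X_of_isRetic hv) with h | h
    · unfold IsRetic at hv
      omega
    · exact h.2.le
  exact (Set.ncard_le_one_iff).1 hout ha hb

theorem inDeg_eq_one_of_not_isRetic {v : V} (hv : ¬ IsRetic N v) (hroot : v ≠ N.root) :
    inDeg N.Arc v = 1 := by
  by_cases hx : v ∈ N.X
  · exact N.leaf_in v hx
  · rcases N.internal v hroot hx with h | h
    · exact h.1
    · exact absurd h.1 hv

theorem exists_two_parents {r : V} (hr : IsRetic N r) :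
    ∃ a b, a ≠ b ∧ N.Arc a r ∧ N.Arc b r := by
  obtain ⟨a, b, ha, hb, hab⟩ := (Set.one_lt_ncard_iff).1 hr
  exact ⟨a, b, hab, ha, hb⟩

theorem eq_or_eq_of_arc (hbin : IsBinary N) {v a b c : V} (hab : a ≠ b) (ha : N.Arc v a)
    (hb : N.Arc v b) (hc : N.Arc v c) : c = a ∨ c = b := by
  have hsub : ({a, b} : Set V) ⊆ {u | N.Arc v u} := by
    rintro u (rfl | rfl) <;> assumption
  have heq := Set.eq_of_subset_of_ncard_le hsub (by rw [Set.ncard_pair hab]; exact (hbin v).2)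
  have hc' : c ∈ ({a, b} : Set V) := heq ▸ hc
  simpa using hc'

theorem exists_arc_ne_of_isTreeVert {v c : V} (hv : IsTreeVert N v) (hc : N.Arc v c)
    (hrc : IsRetic N c) : ∃ c', N.Arc v c' ∧ c' ≠ c := by
  by_cases hroot : v = N.root
  · subst hroot
    -- a parent of `c` other than the root is reached from the root through a child other than `c`
    obtain ⟨a, b, hab, ha, hb⟩ := N.exists_two_parents hrc
    obtain ⟨u, hu, hur⟩ : ∃ u, N.Arc u c ∧ u ≠ N.root := by
      by_cases har : a = N.root
      · exact ⟨b, hb, fun h => hab (har.trans h.symm)⟩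
      · exact ⟨a, ha, har⟩
    rcases (N.reach u).cases_head with h | ⟨x, hx, hxu⟩
    · exact absurd h.symm hur
    · refine ⟨x, hx, ?_⟩
      rintro rfl
      exact N.acyclic x (TransGen.tail' hxu hu)
  · rcases N.internal v hroot hv.1 with h | h
    · exact Set.exists_ne_of_one_lt_ncard h.2 c
    · exact absurd h.1 (N.not_isRetic_of_isTreeVert hv)

theorem zEdge_iff {t r : V} : ZEdge N t r ↔ IsTreeVert N t ∧ IsRetic N r ∧ N.Arc t r :=
  ⟨fun ⟨ht, _, hr, h⟩ => ⟨ht, hr, h⟩, fun ⟨ht, hr, h⟩ => ⟨ht, ⟨r, h, hr⟩, hr, h⟩⟩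

end PhyloNet

section SupportTree

variable {V : Type*} [Fintype V] [DecidableEq V] {N : PhyloNet V} {T : V → V → Prop}

theorem IsSupportTree.exists_child (hT : IsSupportTree N T) {v : V} (hv : v ∉ N.X) :
    ∃ c, T v c := by
  by_contra! h
  exact hv (hT.2 v (by simp [outDeg, h]))

theorem IsSupportTree.eq_of_parent (hT : IsSupportTree N T) {v a b : V} (hv : v ≠ N.root)
    (ha : T a v) (hb : T b v) : a = b :=
  (Set.ncard_le_one_iff).1 (hT.1.2.2 v hv).le ha hb

theorem isSupportTree_of (hsub : ∀ u v, T u v → N.Arc u v)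
    (hin : ∀ v, v ≠ N.root → inDeg T v = 1) (hout : ∀ v, v ∉ N.X → ∃ c, T v c) :
    IsSupportTree N T := by
  refine ⟨⟨hsub, fun v => ⟨fun h0 => ?_, ?_⟩, hin⟩, fun v h0 => ?_⟩
  · by_contra hv
    rw [hin v hv] at h0
    exact one_ne_zero h0
  · rintro rfl
    rw [inDeg, Set.ncard_eq_zero]
    exact Set.eq_empty_of_forall_notMem fun u h => N.not_arc_root_s14 u (hsub u N.root h)
  · by_contra hv
    obtain ⟨c, hc⟩ := hout v hv
    exact ((Set.ncard_pos).2 ⟨c, hc⟩).ne' h0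

theorem IsSupportTree.exists_injOn (hbin : IsBinary N) (hT : IsSupportTree N T) :
    ∃ d : V → V, (∀ r, IsRetic N r → IsTreeVert N (d r) ∧ N.Arc (d r) r) ∧
      Set.InjOn d {r | IsRetic N r} := by
  have hdrop : ∀ r, IsRetic N r → ∃ u, N.Arc u r ∧ ¬ T u r := by
    intro r hr
    obtain ⟨a, b, hab, ha, hb⟩ := N.exists_two_parents hr
    by_contra! h
    exact hab (hT.eq_of_parent (N.ne_root_of_isRetic hr) (h a ha) (h b hb))
  choose! d hd hdT using hdrop
  refine ⟨d, fun r hr => ⟨N.isTreeVert_of_arc (hd r hr) fun hret => ?_, hd r hr⟩, ?_⟩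
  · obtain ⟨c, hc⟩ := hT.exists_child (N.not_mem_X_of_arc (hd r hr))
    obtain rfl := N.eq_of_arc_of_isRetic hret (hT.1.1 _ _ hc) (hd r hr)
    exact hdT c hr hc
  · intro r₁ h₁ r₂ h₂ heq
    by_contra hne
    obtain ⟨c, hc⟩ := hT.exists_child (N.not_mem_X_of_arc (hd r₁ h₁))
    rcases N.eq_or_eq_of_arc hbin hne (hd r₁ h₁) (heq ▸ hd r₂ h₂) (hT.1.1 _ _ hc) with rfl | rfl
    · exact hdT c h₁ hc
    · exact hdT c h₂ (heq ▸ hc)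

theorem treeBased_of_injOn (hbin : IsBinary N) {f : V → V}
    (hf : ∀ r, IsRetic N r → IsTreeVert N (f r) ∧ N.Arc (f r) r)
    (hinj : Set.InjOn f {r | IsRetic N r}) : TreeBased N := by
  refine ⟨fun u v => N.Arc u v ∧ (IsRetic N v → u ≠ f v),
    isSupportTree_of (fun _ _ h => h.1) (fun v hv => ?_) (fun v hv => ?_)⟩
  · by_cases hr : IsRetic N v
    · have hset : {u | N.Arc u v ∧ (IsRetic N v → u ≠ f v)} = {u | N.Arc u v} \ {f v} := by
        ext u
        simp [hr]
      have hmem : f v ∈ {u | N.Arc u v} := (hf v hr).2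
      have h2 : inDeg N.Arc v ≤ 2 := (hbin v).1
      rw [inDeg, hset, Set.ncard_sdiff_singleton_of_mem hmem]
      unfold IsRetic inDeg at *
      omega
    · have hset : {u | N.Arc u v ∧ (IsRetic N v → u ≠ f v)} = {u | N.Arc u v} := by
        ext u
        simp [hr]
      rw [inDeg, hset]
      exact N.inDeg_eq_one_of_not_isRetic hr hv
  · obtain ⟨c, hc⟩ := N.exists_arc_of_not_mem_X hv
    by_cases hr : IsRetic N v
    · exact ⟨c, hc, fun hrc h => N.not_isRetic_of_isTreeVert (hf c hrc).1 (h ▸ hr)⟩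
    by_cases hrc : IsRetic N c
    · obtain ⟨c', hc', hne⟩ := N.exists_arc_ne_of_isTreeVert (N.isTreeVert_of_arc hc hr) hc hrc
      by_cases hfc : f c = v
      · exact ⟨c', hc', fun hrc' h => hne (hinj hrc' hrc (h ▸ hfc.symm))⟩
      · exact ⟨c, hc, fun _ h => hfc h.symm⟩
    · exact ⟨c, hc, fun h => absurd h hrc⟩

theorem treeBased_iff_exists_injOn (hbin : IsBinary N) :
    TreeBased N ↔ ∃ f : V → V, (∀ r, IsRetic N r → IsTreeVert N (f r) ∧ N.Arc (f r) r) ∧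
      Set.InjOn f {r | IsRetic N r} :=
  ⟨fun ⟨_, hT⟩ => hT.exists_injOn hbin, fun ⟨_, hf, hinj⟩ => treeBased_of_injOn hbin hf hinj⟩

end SupportTree

/-- a binary network is tree-based iff `Z_N` has a matching of size `|R|`. -/
theorem stmt14 {V : Type*} [Fintype V] [DecidableEq V] (N : PhyloNet V)
    (hb : IsBinary N) :
    TreeBased N ↔
      ∃ M : Finset (V × V), IsMatchingOn (ZEdge N) M ∧
        M.card = {v | IsRetic N v}.ncard := by
  classical
  have hR : {v | IsRetic N v} = ↑(Finset.univ.filter (IsRetic N)) := by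
    ext
    simp
  rw [hR, Set.ncard_coe_finset,
    exists_isMatchingOn_card_eq_iff fun _ _ h => by simpa using ((N.zEdge_iff).1 h).2.1,
    treeBased_iff_exists_injOn hb]
  simp +contextual [N.zEdge_iff]
end
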